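/- In the metric graph setup, fix the combinatorial graph. For any compact set Ω ⊂ ℂ and any compact set 𝓛 ⊂ (0,∞) there exists a constant C₁, depending only on Ω and 𝓛, such that for every choice of finite edge lengths ℓ_m ∈ 𝓛 the set of resonances of the Kirchhoff Laplacian P lying in Ω (i.e. the set of λ ∈ Ω admitting a nonzero outgoing resonant state) is finite and has at most C₁ elements. -/

import Mathlib

open MeasureTheory
open scoped Classical

/-- A finite combinatorial graph with `K ≥ 1` infinite leads (each attached to a vertex
at `x = 0`) and `M` finite edges, each with two distinct endpoints. -/
structure QGraph where
  /-- vertex set -/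
  V : Type
  fV : Fintype V
  /-- number of infinite leads -/
  K : ℕ
  /-- number of finite edges -/
  M : ℕ
  hK : 0 < K
  /-- the vertex to which lead `k` is attached (its `x = 0` end) -/
  leadV : Fin K → V
  /-- the `x = 0` endpoint of finite edge `m` -/
  ep0 : Fin M → V
  /-- the `x = ℓ_m` endpoint of finite edge `m` -/
  ep1 : Fin M → V
  ep_ne : ∀ m, ep0 m ≠ ep1 m

attribute [instance] QGraph.fV

/-- A function on the metric graph: one function per lead and one per finite edge
(given as globally defined functions; only values on `[0,∞)` resp. `[0,ℓ_m]` matter). -/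
structure GraphFun (G : QGraph) where
  lead : Fin G.K → ℝ → ℂ
  edge : Fin G.M → ℝ → ℂ

/-- All component functions are twice continuously differentiable. -/
def GraphFun.Smooth {G : QGraph} (u : GraphFun G) : Prop :=
  (∀ k, ContDiff ℝ 2 (u.lead k)) ∧ (∀ m, ContDiff ℝ 2 (u.edge m))

/-- Kirchhoff vertex conditions for edge lengths `ℓ`: continuity at each vertex
(a common vertex value) and vanishing of the sum of outward normal derivatives
`∂_ν u_m(0) = −u_m'(0)`, `∂_ν u_m(ℓ_m) = u_m'(ℓ_m)` at each vertex. -/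
def GraphFun.Kirchhoff {G : QGraph} (u : GraphFun G) (ℓ : Fin G.M → ℝ) : Prop :=
  (∃ val : G.V → ℂ,
    (∀ k, u.lead k 0 = val (G.leadV k)) ∧
    (∀ m, u.edge m 0 = val (G.ep0 m)) ∧
    (∀ m, u.edge m (ℓ m) = val (G.ep1 m))) ∧
  (∀ v : G.V,
    (∑ k ∈ Finset.univ.filter (fun k => G.leadV k = v), -(deriv (u.lead k) 0))
    + (∑ m ∈ Finset.univ.filter (fun m => G.ep0 m = v), -(deriv (u.edge m) 0))
    + (∑ m ∈ Finset.univ.filter (fun m => G.ep1 m = v), deriv (u.edge m) (ℓ m)) = 0)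

/-- The tuple does not vanish identically on the metric graph. -/
def GraphFun.Nontrivial {G : QGraph} (u : GraphFun G) (ℓ : Fin G.M → ℝ) : Prop :=
  (∃ k, ∃ x : ℝ, 0 ≤ x ∧ u.lead k x ≠ 0) ∨
  (∃ m, ∃ x ∈ Set.Icc (0:ℝ) (ℓ m), u.edge m x ≠ 0)

/-- `u` is an outgoing resonant state for `λ`: `C²`, Kirchhoff conditions,
`−u_m'' = λ² u_m` on every finite edge, and `u_k(x) = a_k e^{iλx}` on every lead. -/
def IsResonantState (G : QGraph) (ℓ : Fin G.M → ℝ) (lam : ℂ) (u : GraphFun G) : Prop :=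
  u.Smooth ∧ u.Kirchhoff ℓ ∧
  (∀ m, ∀ x ∈ Set.Icc (0:ℝ) (ℓ m), -(deriv (deriv (u.edge m)) x) = lam ^ 2 * u.edge m x) ∧
  (∃ a : Fin G.K → ℂ, ∀ k, ∀ x : ℝ, 0 ≤ x →
    u.lead k x = a k * Complex.exp (Complex.I * lam * (x : ℂ)))

/-- `λ` is a resonance of the Kirchhoff Laplacian: it admits a nonzero outgoing
resonant state. -/
def IsResonance (G : QGraph) (ℓ : Fin G.M → ℝ) (lam : ℂ) : Prop :=
  ∃ u : GraphFun G, IsResonantState G ℓ lam u ∧ u.Nontrivial ℓ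

/-- The squared `L²` norm of a tuple on the metric graph. -/
noncomputable def graphNormSq (G : QGraph) (ℓ : Fin G.M → ℝ) (u : GraphFun G) : ℝ :=
  (∑ k, ∫ x in Set.Ioi (0:ℝ), ‖u.lead k x‖ ^ 2) +
  ∑ m, ∫ x in (0:ℝ)..(ℓ m), ‖u.edge m x‖ ^ 2

/-- The squared `L²` norm of `(P − z)u = (−u_m'' − z·u_m)_m` on the metric graph. -/
noncomputable def graphDefectSq (G : QGraph) (ℓ : Fin G.M → ℝ) (z : ℂ) (u : GraphFun G) : ℝ :=
  (∑ k, ∫ x in Set.Ioi (0:ℝ), ‖-(deriv (deriv (u.lead k)) x) - z * u.lead k x‖ ^ 2) +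
  ∑ m, ∫ x in (0:ℝ)..(ℓ m), ‖-(deriv (deriv (u.edge m)) x) - z * u.edge m x‖ ^ 2

/-- `u` is supported in `[0, R]` on every infinite lead. -/
def LeadSupport (G : QGraph) (u : GraphFun G) (R : ℝ) : Prop :=
  ∀ k, ∀ x : ℝ, R < x → u.lead k x = 0

/-!
Resonances are zeros of an entire function. Writing the edge solutions as
`λ u(x) = λ u(0) cos λx + u'(0) sin λx`, the vertex conditions and the outgoing condition
become a square linear system in the lead amplitudes, the edge data at `0` and the vertex
values; its determinant `d_ℓ(λ)` is entire in `λ`, continuous in `(ℓ, λ)`, and vanishes at every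
resonance. At `λ = i` the system has only the trivial solution, by the energy identity expressing
positivity of `P + 1`, so `|d_ℓ(i)|` is bounded below uniformly for `ℓ ∈ 𝓛^M` by compactness,
while `|d_ℓ|` is bounded above uniformly on a large circle around `i`. Jensen's inequality then
bounds the number of zeros in `Ω` uniformly.
-/

def QGraph.IsIsolated (G : QGraph) (v : G.V) : Prop :=
  (∀ k, G.leadV k ≠ v) ∧ (∀ m, G.ep0 m ≠ v) ∧ (∀ m, G.ep1 m ≠ v)

/-- Unknowns of the secular system: lead amplitudes `a_k`, edge data `u_m(0)` and `u_m'(0)`,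
and vertex values. -/
abbrev SecularIndex (G : QGraph) := Fin G.K ⊕ Fin G.M ⊕ Fin G.M ⊕ G.V

/-- Rows: continuity at the lead ends and at the `0`-ends of the edges; continuity at the
`ℓ_m`-ends, multiplied by `λ` so that it reads `λ u_m(ℓ_m) = λ u_m(0) cos λℓ_m + u_m'(0) sin λℓ_m`
with entire coefficients; the Kirchhoff flux condition at each vertex. An isolated vertex gets
the row `w_v = 0`, so that its value is not a free unknown. -/
noncomputable def secularMatrix (G : QGraph) (ℓ : Fin G.M → ℝ) (lam : ℂ) :
    Matrix (SecularIndex G) (SecularIndex G) ℂ :=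
  fun i j =>
    match i, j with
    | .inl k, .inl k' => if k = k' then 1 else 0
    | .inl k, .inr (.inr (.inr v)) => if G.leadV k = v then -1 else 0
    | .inl _, _ => 0
    | .inr (.inl m), .inr (.inl m') => if m = m' then 1 else 0
    | .inr (.inl m), .inr (.inr (.inr v)) => if G.ep0 m = v then -1 else 0
    | .inr (.inl _), _ => 0
    | .inr (.inr (.inl m)), .inr (.inl m') =>
        if m = m' then lam * Complex.cos (lam * ℓ m) else 0
    | .inr (.inr (.inl m)), .inr (.inr (.inl m')) =>
        if m = m' then Complex.sin (lam * ℓ m) else 0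
    | .inr (.inr (.inl m)), .inr (.inr (.inr v)) => if G.ep1 m = v then -lam else 0
    | .inr (.inr (.inl _)), _ => 0
    | .inr (.inr (.inr v)), .inl k => if G.leadV k = v then -(Complex.I * lam) else 0
    | .inr (.inr (.inr v)), .inr (.inl m) =>
        if G.ep1 m = v then -(lam * Complex.sin (lam * ℓ m)) else 0
    | .inr (.inr (.inr v)), .inr (.inr (.inl m)) =>
        (if G.ep0 m = v then -1 else 0) + (if G.ep1 m = v then Complex.cos (lam * ℓ m) else 0)
    | .inr (.inr (.inr v)), .inr (.inr (.inr w)) => if v = w ∧ G.IsIsolated v then 1 else 0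

namespace secularMatrix

variable {G : QGraph} (ℓ : Fin G.M → ℝ) (lam : ℂ) (a : Fin G.K → ℂ) (α β : Fin G.M → ℂ)
  (w : G.V → ℂ)

open Finset Matrix

theorem mulVec_lead (k : Fin G.K) :
    (secularMatrix G ℓ lam *ᵥ Sum.elim a (Sum.elim α (Sum.elim β w))) (.inl k)
      = a k - w (G.leadV k) := by
  simp [mulVec, dotProduct, Fintype.sum_sum_type, secularMatrix, ite_mul, sub_eq_add_neg]

theorem mulVec_edgeStart (m : Fin G.M) :
    (secularMatrix G ℓ lam *ᵥ Sum.elim a (Sum.elim α (Sum.elim β w))) (.inr (.inl m))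
      = α m - w (G.ep0 m) := by
  simp [mulVec, dotProduct, Fintype.sum_sum_type, secularMatrix, ite_mul, sub_eq_add_neg]

theorem mulVec_edgeEnd (m : Fin G.M) :
    (secularMatrix G ℓ lam *ᵥ Sum.elim a (Sum.elim α (Sum.elim β w))) (.inr (.inr (.inl m)))
      = lam * Complex.cos (lam * ℓ m) * α m + Complex.sin (lam * ℓ m) * β m
        - lam * w (G.ep1 m) := by
  simp only [mulVec, dotProduct, secularMatrix, Fintype.sum_sum_type, Sum.elim_inl, zero_mul,
    sum_const_zero, Sum.elim_inr, ite_mul, sum_ite_eq, mem_univ, ↓reduceIte, neg_mul, zero_add]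
  ring

theorem mulVec_vertex (v : G.V) :
    (secularMatrix G ℓ lam *ᵥ Sum.elim a (Sum.elim α (Sum.elim β w))) (.inr (.inr (.inr v)))
      = (∑ k with G.leadV k = v, -(Complex.I * lam * a k))
        + (∑ m with G.ep0 m = v, -β m)
        + (∑ m with G.ep1 m = v,
            (Complex.cos (lam * ℓ m) * β m - lam * Complex.sin (lam * ℓ m) * α m))
        + if G.IsIsolated v then w v else 0 := by
  have hsplit : (∑ m with G.ep1 m = v,
        (Complex.cos (lam * ℓ m) * β m - lam * Complex.sin (lam * ℓ m) * α m))
      = (∑ m with G.ep1 m = v, -(lam * Complex.sin (lam * ℓ m)) * α m)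
        + ∑ m with G.ep1 m = v, Complex.cos (lam * ℓ m) * β m := by
    rw [← sum_add_distrib]; exact sum_congr rfl fun _ _ => by ring
  rw [hsplit]
  simp only [mulVec, dotProduct, Fintype.sum_sum_type, secularMatrix, Sum.elim_inl,
    Sum.elim_inr, sum_filter, add_mul, ite_mul, zero_mul, one_mul, ite_and,
    sum_ite_eq, mem_univ, if_true, sum_add_distrib, neg_mul]
  ring

end secularMatrix

theorem Differentiable.matrix_det {E 𝕜 n : Type*} [NontriviallyNormedField 𝕜]
    [NormedAddCommGroup E] [NormedSpace 𝕜 E] [Fintype n] [DecidableEq n]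
    {A : E → Matrix n n 𝕜} (hA : ∀ i j, Differentiable 𝕜 fun z => A z i j) :
    Differentiable 𝕜 fun z => (A z).det := by
  simp only [Matrix.det_apply]
  fun_prop

theorem differentiable_secularMatrix_apply (G : QGraph) (ℓ : Fin G.M → ℝ)
    (i j : SecularIndex G) :
    Differentiable ℂ fun lam => secularMatrix G ℓ lam i j := by
  rcases i with _ | _ | _ | _ <;> rcases j with _ | _ | _ | _ <;> simp only [secularMatrix] <;>
    (try split_ifs) <;> fun_prop

theorem continuous_secularMatrix_apply (G : QGraph) (i j : SecularIndex G) :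
    Continuous fun p : (Fin G.M → ℝ) × ℂ => secularMatrix G p.1 p.2 i j := by
  rcases i with _ | _ | _ | _ <;> rcases j with _ | _ | _ | _ <;> simp only [secularMatrix] <;>
    (try split_ifs) <;> fun_prop

section Helmholtz

variable {lam : ℂ} {c : ℝ} {w : ℝ → ℂ}

/-- Multiplied by `λ`, the explicit solution of `-w'' = λ² w` also covers `λ = 0`. -/
theorem cos_sin_repr_of_neg_deriv_deriv_eq (hw : ContDiff ℝ 2 w)
    (hode : ∀ x ∈ Set.Icc 0 c, -deriv (deriv w) x = lam ^ 2 * w x) {x : ℝ}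
    (hx : x ∈ Set.Icc 0 c) :
    lam * w x = lam * w 0 * Complex.cos (lam * x) + deriv w 0 * Complex.sin (lam * x) ∧
      deriv w x = deriv w 0 * Complex.cos (lam * x) - lam * w 0 * Complex.sin (lam * x) := by
  have hw' : ∀ y, HasDerivAt w (deriv w y) y := fun y =>
    (hw.differentiable two_ne_zero y).hasDerivAt
  have hw'' : ∀ y, HasDerivAt (deriv w) (deriv (deriv w) y) y := fun y =>
    ((hw.iterate_deriv' 1 1).differentiable one_ne_zero y).hasDerivAt
  have hcos : ∀ y : ℝ, HasDerivAt (fun y : ℝ => Complex.cos (lam * y))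
      (-Complex.sin (lam * y) * lam) y := fun y => by
    simpa using ((hasDerivAt_id (y : ℂ)).const_mul lam).ccos.comp_ofReal
  have hsin : ∀ y : ℝ, HasDerivAt (fun y : ℝ => Complex.sin (lam * y))
      (Complex.cos (lam * y) * lam) y := fun y => by
    simpa using ((hasDerivAt_id (y : ℂ)).const_mul lam).csin.comp_ofReal
  have hconst : ∀ (h k : ℝ → ℂ),
      (∀ y, HasDerivAt h ((deriv (deriv w) y + lam ^ 2 * w y) * k y) y) →
      h x = h 0 := by
    intro h k hh
    refine constant_of_has_deriv_right_zero (fun y _ => (hh y).continuousAt.continuousWithinAt)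
      (fun y hy => ?_) x hx
    have hy' := hode y (Set.Ico_subset_Icc_self hy)
    simpa [show deriv (deriv w) y + lam ^ 2 * w y = 0 by linear_combination -hy']
      using (hh y).hasDerivWithinAt
  -- `w' cos λx + λ w sin λx` and `λ w cos λx - w' sin λx` are conserved
  have h₁ := hconst (fun y => deriv w y * Complex.cos (lam * y) + lam * w y * Complex.sin (lam * y))
    (fun y => Complex.cos (lam * y)) fun y =>
      (((hw'' y).mul (hcos y)).add (((hw' y).const_mul lam).mul (hsin y))).congr_deriv (by ring)
  have h₂ := hconst (fun y => lam * w y * Complex.cos (lam * y) - deriv w y * Complex.sin (lam * y))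
    (fun y => -Complex.sin (lam * y)) fun y =>
      ((((hw' y).const_mul lam).mul (hcos y)).sub ((hw'' y).mul (hsin y))).congr_deriv (by ring)
  simp only [Complex.ofReal_zero, mul_zero, Complex.cos_zero, Complex.sin_zero, mul_one,
    add_zero, sub_zero] at h₁ h₂
  have hpyth := Complex.sin_sq_add_cos_sq (lam * x)
  constructor
  · linear_combination Complex.sin (lam * x) * h₁ + Complex.cos (lam * x) * h₂ - lam * w x * hpyth
  · linear_combination Complex.cos (lam * x) * h₁ - Complex.sin (lam * x) * h₂ - deriv w x * hpyth

theorem eqOn_zero_of_neg_deriv_deriv_eq (hw : ContDiff ℝ 2 w)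
    (hode : ∀ x ∈ Set.Icc 0 c, -deriv (deriv w) x = lam ^ 2 * w x)
    (h₀ : w 0 = 0) (h₀' : deriv w 0 = 0) : Set.EqOn w 0 (Set.Icc 0 c) := by
  intro x hx
  refine (constant_of_has_deriv_right_zero hw.continuous.continuousOn (fun y hy => ?_) x hx).trans
    h₀
  have hy' := (cos_sin_repr_of_neg_deriv_deriv_eq hw hode (Set.Ico_subset_Icc_self hy)).2
  rw [h₀, h₀', zero_mul, mul_zero, zero_mul, sub_zero] at hy'
  exact hy' ▸ (hw.differentiable two_ne_zero y).hasDerivAt.hasDerivWithinAt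

end Helmholtz

theorem deriv_eq_of_eqOn_Ici {E : Type*} [NormedAddCommGroup E] [NormedSpace ℝ E]
    {f g : ℝ → E} {x : ℝ} {g' : E} (hf : DifferentiableAt ℝ f x) (hfg : Set.EqOn f g (Set.Ici x))
    (hg : HasDerivAt g g' x) : deriv f x = g' :=
  (uniqueDiffWithinAt_Ici x).eq_deriv _ hf.hasDerivAt.hasDerivWithinAt
    (hg.hasDerivWithinAt.congr (fun _ hy => hfg hy) (hfg Set.self_mem_Ici))

theorem IsResonance.det_secularMatrix_eq_zero {G : QGraph} {ℓ : Fin G.M → ℝ} {lam : ℂ}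
    (hℓ : ∀ m, 0 ≤ ℓ m) (h : IsResonance G ℓ lam) : (secularMatrix G ℓ lam).det = 0 := by
  obtain ⟨u, ⟨⟨hlead, hedge⟩, ⟨⟨val, hval_lead, hval_start, hval_end⟩, hflux⟩, hode, a, ha⟩, hu⟩ :=
    h
  have hrepr m := cos_sin_repr_of_neg_deriv_deriv_eq (hedge m) (hode m)
    (Set.right_mem_Icc.2 (hℓ m))
  have hlead_deriv k : deriv (u.lead k) 0 = a k * (Complex.I * lam) :=
    deriv_eq_of_eqOn_Ici ((hlead k).differentiable two_ne_zero 0) (fun x hx => ha k x hx)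
      (by simpa using (((hasDerivAt_id (0 : ℂ)).const_mul (Complex.I * lam)).cexp.const_mul
        (a k)).comp_ofReal)
  refine Matrix.exists_mulVec_eq_zero_iff.mp
    ⟨Sum.elim a (Sum.elim (fun m => u.edge m 0) (Sum.elim (fun m => deriv (u.edge m) 0)
      (fun v => if G.IsIsolated v then 0 else val v))), fun h0 => ?_, ?_⟩
  · have hzero := congrFun h0
    rcases hu with ⟨k, x, hx, hne⟩ | ⟨m, x, hx, hne⟩
    · exact hne (by simp [ha k x hx, show a k = 0 from hzero (.inl k)])
    · exact hne (eqOn_zero_of_neg_deriv_deriv_eq (hedge m) (hode m) (hzero (.inr (.inl m)))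
        (hzero (.inr (.inr (.inl m)))) hx)
  · ext (k | m | m | v)
    · rw [secularMatrix.mulVec_lead, if_neg fun hiso => hiso.1 k rfl, ← hval_lead k,
        ha k 0 le_rfl]
      simp
    · rw [secularMatrix.mulVec_edgeStart, if_neg fun hiso => hiso.2.1 m rfl, ← hval_start m,
        sub_self, Pi.zero_apply]
    · rw [secularMatrix.mulVec_edgeEnd, if_neg fun hiso => hiso.2.2 m rfl, ← hval_end m,
        Pi.zero_apply]
      linear_combination -(hrepr m).1
    · rw [secularMatrix.mulVec_vertex, ite_eq_right_iff.2 fun hiso => if_pos hiso, add_zero,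
        Pi.zero_apply, ← hflux v]
      congr 1
      · congr 1
        exact Finset.sum_congr rfl fun k _ => by rw [hlead_deriv]; ring
      · exact Finset.sum_congr rfl fun m _ => by rw [(hrepr m).2]; ring

open ComplexConjugate

theorem Finset.sum_mul_sum_fiber {ι κ R : Type*} [Fintype ι] [Fintype κ] [DecidableEq κ]
    [CommSemiring R] (g : ι → κ) (f : κ → R) (t : ι → R) :
    ∑ j, f j * ∑ i with g i = j, t i = ∑ i, f (g i) * t i := by
  rw [← Finset.sum_fiberwise Finset.univ g]
  refine Finset.sum_congr rfl fun j _ => ?_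
  rw [Finset.mul_sum]
  exact Finset.sum_congr rfl fun i hi => by rw [(Finset.mem_filter.1 hi).2]

/-- For `u = α cosh + β sinh` on `[0, r]` this is the boundary term `[conj u · u']₀ʳ`,
that is `∫₀ʳ |u'|² + |u|²`. -/
noncomputable def edgeEnergy (r : ℝ) (α β : ℂ) : ℂ :=
  conj (Real.cosh r * α + Real.sinh r * β) * (Real.sinh r * α + Real.cosh r * β) - conj α * β

theorem re_edgeEnergy (r : ℝ) (α β : ℂ) :
    (edgeEnergy r α β).re = Real.sinh r * ((Real.cosh r - Real.sinh r) *
      (Complex.normSq α + Complex.normSq β) + Real.sinh r * Complex.normSq (α + β)) := by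
  simp only [edgeEnergy, Complex.sub_re, Complex.mul_re, Complex.add_re, Complex.add_im,
    Complex.mul_im, Complex.conj_re, Complex.conj_im, Complex.ofReal_re, Complex.ofReal_im,
    Complex.normSq_apply]
  linear_combination (α.re * β.re + α.im * β.im) * Real.cosh_sq_sub_sinh_sq r

theorem edgeEnergy_re_nonneg {r : ℝ} (hr : 0 ≤ r) (α β : ℂ) : 0 ≤ (edgeEnergy r α β).re := by
  rw [re_edgeEnergy, Real.cosh_sub_sinh]
  have hs := Real.sinh_nonneg_iff.2 hr
  exact mul_nonneg hs (add_nonneg (mul_nonneg (Real.exp_pos _).le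
    (add_nonneg (Complex.normSq_nonneg _) (Complex.normSq_nonneg _)))
    (mul_nonneg hs (Complex.normSq_nonneg _)))

theorem eq_zero_of_edgeEnergy_re_eq_zero {r : ℝ} (hr : 0 < r) {α β : ℂ}
    (h : (edgeEnergy r α β).re = 0) : α = 0 ∧ β = 0 := by
  rw [re_edgeEnergy, Real.cosh_sub_sinh, mul_eq_zero, or_iff_right (Real.sinh_pos_iff.2 hr).ne']
    at h
  have := Real.sinh_pos_iff.2 hr
  have := Real.exp_pos (-r)
  have := Complex.normSq_nonneg (α + β)
  have := Complex.normSq_nonneg α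
  have := Complex.normSq_nonneg β
  constructor <;> rw [← Complex.normSq_eq_zero] <;> nlinarith

open Finset in
/-- Green's formula for the secular system at `λ = i`. -/
theorem sum_conj_mul_vertexFlux {G : QGraph} (ℓ : Fin G.M → ℝ) {a : Fin G.K → ℂ}
    {α β : Fin G.M → ℂ} {w : G.V → ℂ} (hlead : ∀ k, a k = w (G.leadV k))
    (hstart : ∀ m, α m = w (G.ep0 m))
    (hend : ∀ m, Real.cosh (ℓ m) * α m + Real.sinh (ℓ m) * β m = w (G.ep1 m)) :
    ∑ v, conj (w v) * ((∑ k with G.leadV k = v, a k) + (∑ m with G.ep0 m = v, -β m)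
        + ∑ m with G.ep1 m = v, (Real.sinh (ℓ m) * α m + Real.cosh (ℓ m) * β m))
      = ∑ k, conj (a k) * a k + ∑ m, edgeEnergy (ℓ m) (α m) (β m) := by
  simp only [mul_add, sum_add_distrib, sum_mul_sum_fiber G.leadV, sum_mul_sum_fiber G.ep0,
    sum_mul_sum_fiber G.ep1, ← hlead, ← hstart, ← hend, edgeEnergy]
  simp only [sum_sub_distrib, sum_add_distrib, mul_neg, sum_neg_distrib]
  ring

open Finset Matrix in
theorem eq_zero_of_secularMatrix_I_mulVec_eq_zero {G : QGraph} {ℓ : Fin G.M → ℝ}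
    (hℓ : ∀ m, 0 < ℓ m) {a : Fin G.K → ℂ} {α β : Fin G.M → ℂ} {w : G.V → ℂ}
    (h : secularMatrix G ℓ Complex.I *ᵥ Sum.elim a (Sum.elim α (Sum.elim β w)) = 0) :
    a = 0 ∧ α = 0 ∧ β = 0 ∧ w = 0 := by
  have hcos (r : ℝ) : Complex.cos (Complex.I * r) = Real.cosh r := by
    rw [mul_comm, Complex.cos_mul_I, Complex.ofReal_cosh]
  have hsin (r : ℝ) : Complex.sin (Complex.I * r) = Real.sinh r * Complex.I := by
    rw [mul_comm, Complex.sin_mul_I, Complex.ofReal_sinh]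
  have hlead k : a k = w (G.leadV k) :=
    sub_eq_zero.1 (by simpa [secularMatrix.mulVec_lead] using congrFun h (.inl k))
  have hstart m : α m = w (G.ep0 m) :=
    sub_eq_zero.1 (by simpa [secularMatrix.mulVec_edgeStart] using congrFun h (.inr (.inl m)))
  have hend m : Real.cosh (ℓ m) * α m + Real.sinh (ℓ m) * β m = w (G.ep1 m) := by
    have hrow := congrFun h (.inr (.inr (.inl m)))
    rw [secularMatrix.mulVec_edgeEnd, hcos, hsin, Pi.zero_apply] at hrow
    refine mul_left_cancel₀ Complex.I_ne_zero ?_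
    linear_combination hrow
  have hvert v : ((∑ k with G.leadV k = v, a k) + (∑ m with G.ep0 m = v, -β m)
      + ∑ m with G.ep1 m = v, (Real.sinh (ℓ m) * α m + Real.cosh (ℓ m) * β m))
      + (if G.IsIsolated v then w v else 0) = 0 := by
    have hrow := congrFun h (.inr (.inr (.inr v)))
    rw [secularMatrix.mulVec_vertex, Pi.zero_apply] at hrow
    rw [← hrow]
    congr 3
    · simp
    · ext m
      rw [hcos, hsin]
      linear_combination (Real.sinh (ℓ m) * α m) * Complex.I_mul_I
  have henergy : ∑ k, Complex.normSq (a k) + ∑ m, (edgeEnergy (ℓ m) (α m) (β m)).re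
      + ∑ v, (if G.IsIsolated v then Complex.normSq (w v) else 0) = 0 := by
    have h0 : ∑ v, conj (w v) * (((∑ k with G.leadV k = v, a k) + (∑ m with G.ep0 m = v, -β m)
        + ∑ m with G.ep1 m = v, (Real.sinh (ℓ m) * α m + Real.cosh (ℓ m) * β m))
        + (if G.IsIsolated v then w v else 0)) = 0 :=
      sum_eq_zero fun v _ => by rw [hvert v, mul_zero]
    rw [sum_congr rfl fun v _ => mul_add _ _ _, sum_add_distrib,
      sum_conj_mul_vertexFlux ℓ hlead hstart hend] at h0
    simpa only [Complex.add_re, Complex.re_sum, ← Complex.normSq_eq_conj_mul_self, mul_ite,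
      mul_zero, apply_ite Complex.re, Complex.ofReal_re, Complex.zero_re]
      using congrArg Complex.re h0
  have hA : ∀ k ∈ univ, 0 ≤ Complex.normSq (a k) := fun k _ => Complex.normSq_nonneg _
  have hB : ∀ m ∈ univ, 0 ≤ (edgeEnergy (ℓ m) (α m) (β m)).re := fun m _ =>
    edgeEnergy_re_nonneg (hℓ m).le _ _
  have hC : ∀ v ∈ univ, 0 ≤ if G.IsIsolated v then Complex.normSq (w v) else 0 := fun v _ => by
    split_ifs
    exacts [Complex.normSq_nonneg _, le_rfl]
  rw [add_eq_zero_iff_of_nonneg (add_nonneg (sum_nonneg hA) (sum_nonneg hB)) (sum_nonneg hC),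
    add_eq_zero_iff_of_nonneg (sum_nonneg hA) (sum_nonneg hB), sum_eq_zero_iff_of_nonneg hA,
    sum_eq_zero_iff_of_nonneg hB, sum_eq_zero_iff_of_nonneg hC] at henergy
  obtain ⟨⟨hA0, hB0⟩, hC0⟩ := henergy
  have ha k : a k = 0 := Complex.normSq_eq_zero.1 (hA0 k (mem_univ k))
  have hαβ m := eq_zero_of_edgeEnergy_re_eq_zero (hℓ m) (hB0 m (mem_univ m))
  have hw v : w v = 0 := by
    by_cases hv : G.IsIsolated v
    · simpa [hv] using hC0 v (mem_univ v)
    · simp only [QGraph.IsIsolated, not_and_or, not_forall, not_not] at hv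
      rcases hv with ⟨k, rfl⟩ | ⟨m, rfl⟩ | ⟨m, rfl⟩
      · rw [← hlead, ha]
      · rw [← hstart, (hαβ m).1]
      · rw [← hend, (hαβ m).1, (hαβ m).2, mul_zero, mul_zero, add_zero]
  exact ⟨funext ha, funext fun m => (hαβ m).1, funext fun m => (hαβ m).2, funext hw⟩

theorem det_secularMatrix_I_ne_zero {G : QGraph} {ℓ : Fin G.M → ℝ} (hℓ : ∀ m, 0 < ℓ m) :
    (secularMatrix G ℓ Complex.I).det ≠ 0 := by
  intro hdet
  obtain ⟨x, hx, hker⟩ := Matrix.exists_mulVec_eq_zero_iff.mpr hdet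
  obtain ⟨a, α, β, w, rfl⟩ : ∃ a α β w, x = Sum.elim a (Sum.elim α (Sum.elim β w)) :=
    ⟨_, _, _, _, by ext (_ | _ | _ | _) <;> rfl⟩
  obtain ⟨rfl, rfl, rfl, rfl⟩ := eq_zero_of_secularMatrix_I_mulVec_eq_zero hℓ hker
  exact hx (by ext (_ | _ | _ | _) <;> rfl)

open MeromorphicOn in
theorem AnalyticOnNhd.one_le_divisor {𝕜 E : Type*} [NontriviallyNormedField 𝕜]
    [NormedAddCommGroup E] [NormedSpace 𝕜 E] {f : 𝕜 → E} {U : Set 𝕜}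
    (hf : AnalyticOnNhd 𝕜 f U) (hU : IsPreconnected U) {x z : 𝕜} (hx : x ∈ U) (hfx : f x ≠ 0)
    (hz : z ∈ U) (hfz : f z = 0) : 1 ≤ divisor f U z := by
  have hord : analyticOrderAt f z ≠ ⊤ :=
    hf.analyticOrderAt_ne_top_of_isPreconnected hU hx hz
      (by rw [(hf x hx).analyticOrderAt_eq_zero.2 hfx]; exact ENat.zero_ne_top)
  have hord₀ : analyticOrderAt f z ≠ 0 := (hf z hz).analyticOrderAt_ne_zero.2 hfz
  rw [hf.divisor_apply hz]
  lift analyticOrderAt f z to ℕ using hord with n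
  simp only [ne_eq, Nat.cast_eq_zero] at hord₀
  simp only [ENat.map_natCast, WithTop.coe_natCast, WithTop.untop₀_natCast, Nat.one_le_cast]
  omega

open Metric MeromorphicOn in
theorem Differentiable.card_zeros_le {f : ℂ → ℂ} (hf : Differentiable ℂ f) {c : ℂ}
    {r R m M : ℝ} (hr : 0 < r) (hrR : r < R) (hm : 0 < m) (hfc : m ≤ ‖f c‖) (hM : 1 ≤ M)
    (hbound : ∀ z ∈ sphere c R, ‖f z‖ ≤ M) {S : Finset ℂ}
    (hS : ∀ z ∈ S, z ∈ closedBall c r ∧ f z = 0) :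
    (S.card : ℝ) ≤ Real.log (M / m) / Real.log (R / r) := by
  have hR : 0 < R := hr.trans hrR
  have hfc₀ : f c ≠ 0 := norm_pos_iff.1 (hm.trans_le hfc)
  have jensen := AnalyticOnNhd.sum_divisor_le (r := r) (R := R) (by positivity)
    (by rwa [abs_of_pos hr, abs_of_pos hR]) hM (fun z _ => hf.analyticAt z) hfc₀
    (by rwa [abs_of_pos hR])
  rw [abs_of_pos hr] at jensen
  set D := divisor f (closedBall c r)
  have han : AnalyticOnNhd ℂ f (closedBall c r) := fun z _ => hf.analyticAt z
  have hsupp := D.finiteSupport (isCompact_closedBall c r)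
  have hcard : (S.card : ℤ) ≤ ∑ᶠ u, D u := by
    rw [finsum_eq_sum_of_support_subset D (s := S ∪ hsupp.toFinset) (by simp)]
    calc (S.card : ℤ) = ∑ _z ∈ S, 1 := by simp
      _ ≤ ∑ z ∈ S, D z := Finset.sum_le_sum fun z hz =>
        han.one_le_divisor (convex_closedBall c r).isPreconnected (mem_closedBall_self hr.le)
          hfc₀ (hS z hz).1 (hS z hz).2
      _ ≤ ∑ z ∈ S ∪ hsupp.toFinset, D z :=
        Finset.sum_le_sum_of_subset_of_nonneg Finset.subset_union_left
          fun z _ _ => han.divisor_nonneg z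
  have hlogRr : 0 ≤ Real.log (R / r) := Real.log_nonneg ((one_le_div hr).2 hrR.le)
  calc (S.card : ℝ) ≤ ((∑ᶠ u, D u : ℤ) : ℝ) := by exact_mod_cast hcard
    _ ≤ Real.log (M / ‖f c‖) / Real.log (R / r) := jensen
    _ ≤ Real.log (M / m) / Real.log (R / r) := by gcongr

open Metric in
theorem IsCompact.exists_card_zeros_le {X : Type*} [TopologicalSpace X] {F : X → ℂ → ℂ}
    (hF : Continuous fun p : X × ℂ => F p.1 p.2) (hF' : ∀ x, Differentiable ℂ (F x))
    {K : Set X} (hK : IsCompact K) {c : ℂ} (hc : ∀ x ∈ K, F x c ≠ 0) {Ω : Set ℂ}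
    (hΩ : Bornology.IsBounded Ω) :
    ∃ N : ℕ, ∀ x ∈ K, ∀ S : Finset ℂ, (∀ z ∈ S, z ∈ Ω ∧ F x z = 0) → S.card ≤ N := by
  obtain ⟨r, hΩr⟩ := hΩ.subset_closedBall c
  set r' := max r 1
  have hr' : 0 < r' := lt_max_of_lt_right one_pos
  obtain ⟨m, hm, hFm⟩ := hK.exists_forall_le' (f := fun x => ‖F x c‖)
    (hF.comp (Continuous.prodMk_left c)).norm.continuousOn fun x hx => norm_pos_iff.2 (hc x hx)
  obtain ⟨M, hFM⟩ := (hK.prod (isCompact_sphere c (2 * r'))).exists_bound_of_continuousOn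
    hF.continuousOn
  refine ⟨⌈Real.log (max M 1 / m) / Real.log (2 * r' / r')⌉₊, fun x hx S hS => ?_⟩
  refine Nat.cast_le.1 ((Nat.le_ceil _).trans' ?_)
  exact (hF' x).card_zeros_le hr' (by linarith) hm (hFm x hx) (le_max_right _ _)
    (fun z hz => (hFM (x, z) ⟨hx, hz⟩).trans (le_max_left _ _))
    fun z hz => ⟨closedBall_subset_closedBall (le_max_left _ _) (hΩr (hS z hz).1), (hS z hz).2⟩

theorem Set.finite_and_ncard_le_of_forall_finset {α : Type*} {s : Set α} {N : ℕ}
    (h : ∀ t : Finset α, ↑t ⊆ s → t.card ≤ N) : s.Finite ∧ s.ncard ≤ N := by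
  have hs : s.Finite := Set.not_infinite.1 fun hs => by
    obtain ⟨t, hts, ht⟩ := hs.exists_subset_card_eq (N + 1)
    exact (h t hts).not_gt (ht ▸ N.lt_succ_self)
  exact ⟨hs, Set.ncard_eq_toFinset_card s hs ▸ h _ (by simp)⟩

/-- The counting bound of Proposition 3.1 of the paper: for any compact `Ω ⊂ ℂ` and
compact `𝓛 ⊂ (0,∞)` there is a constant `C₁ = C₁(Ω, 𝓛)` such that for every choice of
finite edge lengths in `𝓛` the set of resonances of the Kirchhoff Laplacian lying in
`Ω` is finite with at most `C₁` elements. -/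
theorem stmt11 (G : QGraph) (Ω : Set ℂ) (hΩ : IsCompact Ω)
    (L : Set ℝ) (hLcpt : IsCompact L) (hLpos : L ⊆ Set.Ioi 0) :
    ∃ C₁ : ℕ,
      ∀ ℓ : Fin G.M → ℝ, (∀ m, ℓ m ∈ L) →
        {lam ∈ Ω | IsResonance G ℓ lam}.Finite ∧
        {lam ∈ Ω | IsResonance G ℓ lam}.ncard ≤ C₁ := by
  obtain ⟨N, hN⟩ := (isCompact_univ_pi fun _ : Fin G.M => hLcpt).exists_card_zeros_le
    (F := fun ℓ lam => (secularMatrix G ℓ lam).det)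
    (continuous_pi fun i => continuous_pi fun j => continuous_secularMatrix_apply G i j).matrix_det
    (fun ℓ => Differentiable.matrix_det (differentiable_secularMatrix_apply G ℓ))
    (fun ℓ hℓ => det_secularMatrix_I_ne_zero fun m => hLpos (hℓ m trivial)) hΩ.isBounded
  refine ⟨N, fun ℓ hℓ => Set.finite_and_ncard_le_of_forall_finset fun S hS =>
    hN ℓ (fun m _ => hℓ m) S fun z hz => ⟨(hS hz).1, ?_⟩⟩
  exact (hS hz).2.det_secularMatrix_eq_zero fun m => (hLpos (hℓ m)).le
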